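/- Fix 0 < p ≤ 1 with q = 1−p and let γ ≥ 0 be such that ln(1 + e^{γ/2}) − qγ/2 − ln 2 ≥ 0. Then for every n ≥ 1 and every nonempty subset A ⊆ C_n, one has γ·Δ(A,p) + ln μ_n(A) ≤ n·( ln(1 + e^{γ/2}) − qγ/2 − ln 2 ). -/
import Mathlib


/-- The randomized Hamming distance `d_l(x,y) = Σ_{i : x i ≠ y i} l i`, where the coordinates
with `l i = 1` are the ones that are counted. -/
def dl {ι : Type*} [Fintype ι] (l x y : ι → Bool) : ℕ :=
  (Finset.univ.filter fun i => x i ≠ y i ∧ l i = true).card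

/-- The randomized Hamming distance from a point `x` to a subset `A`:
`d_l(x,A) = min_{y ∈ A} d_l(x,y)`. -/
noncomputable def dlToSet {ι : Type*} [Fintype ι] (l x : ι → Bool) (A : Set (ι → Bool)) : ℕ :=
  sInf ((fun y => dl l x y) '' A)

/-- The probability `p^{|l|}(1-p)^{n-|l|}` of the vector `l` of `n` independent
Bernoulli(p) coordinates. -/
noncomputable def bernWeight {ι : Type*} [Fintype ι] (p : ℝ) (l : ι → Bool) : ℝ :=
  p ^ (Finset.univ.filter fun i => l i = true).card *
    (1 - p) ^ (Finset.univ.filter fun i => l i = false).card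

/-- `Δ(A,p)`: the expectation of `d_l(x,A)` when `x` is uniform on the cube and `l` has
independent Bernoulli(p) coordinates. -/
noncomputable def avgDistP {ι : Type*} [Fintype ι] [DecidableEq ι] (p : ℝ)
    (A : Set (ι → Bool)) : ℝ :=
  ∑ l : ι → Bool, ∑ x : ι → Bool,
    (bernWeight p l / 2 ^ Fintype.card ι) * (dlToSet l x A : ℝ)

section aux
variable {n : ℕ} {p : ℝ}

lemma sum_pi_succ {M : Type*} [AddCommMonoid M] (f : (Fin (n+1) → Bool) → M) :
    ∑ z, f z = ∑ b : Bool, ∑ z : Fin n → Bool, f (Fin.cons b z) := by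
  rw [← Fintype.sum_equiv (Fin.consEquiv fun _ => Bool)
    (fun q => f (Fin.cons q.1 q.2)) f (fun q => rfl)]
  exact Fintype.sum_prod_type _

lemma dl_cons (a b c : Bool) (l x y : Fin n → Bool) :
    dl (Fin.cons a l) (Fin.cons b x) (Fin.cons c y)
      = (if b ≠ c ∧ a = true then 1 else 0) + dl l x y := by
  unfold dl
  rw [Finset.card_filter, Finset.card_filter, Fin.sum_univ_succ]
  simp

lemma bernWeight_cons (a : Bool) (l : Fin n → Bool) :
    bernWeight p (Fin.cons a l) = (if a = true then p else 1 - p) * bernWeight p l := by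
  unfold bernWeight
  rw [Finset.card_filter, Finset.card_filter, Finset.card_filter, Finset.card_filter,
    Fin.sum_univ_succ, Fin.sum_univ_succ]
  cases a <;> simp [pow_add] <;> ring

lemma bernWeight_nonneg (hp0 : 0 ≤ p) (hp1 : p ≤ 1) (l : Fin n → Bool) :
    0 ≤ bernWeight p l := by
  unfold bernWeight
  have : (0:ℝ) ≤ 1 - p := by linarith
  positivity

lemma sum_bernWeight (n : ℕ) : ∑ l : Fin n → Bool, bernWeight p l = 1 := by
  induction n with
  | zero =>
    rw [Fintype.sum_unique]
    simp [bernWeight]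
  | succ m ih =>
    rw [sum_pi_succ (f := fun l => bernWeight p l)]
    simp only [bernWeight_cons, ← Finset.mul_sum, ih]
    simp [Fintype.univ_bool]
end aux

section aux2
variable {n : ℕ} {p : ℝ}

lemma dlToSet_le_dl {l x y : Fin n → Bool} {A : Set (Fin n → Bool)} (hy : y ∈ A) :
    dlToSet l x A ≤ dl l x y :=
  Nat.sInf_le ⟨y, hy, rfl⟩

lemma exists_dl_min {l x : Fin n → Bool} {A : Set (Fin n → Bool)} (hA : A.Nonempty) :
    ∃ y ∈ A, dlToSet l x A = dl l x y := by
  obtain ⟨y, hy, hEq⟩ := Nat.sInf_mem (hA.image fun y => dl l x y)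
  exact ⟨y, hy, hEq.symm⟩

/-- The fiber of `A` over the value `b` of coordinate `0`. -/
def fiber (A : Set (Fin (n+1) → Bool)) (b : Bool) : Set (Fin n → Bool) :=
  {z | Fin.cons b z ∈ A}

lemma dlToSet_cons_le {A : Set (Fin (n+1) → Bool)} {c : Bool} (hc : (fiber A c).Nonempty)
    (a b : Bool) (l x : Fin n → Bool) :
    (dlToSet (Fin.cons a l) (Fin.cons b x) A : ℝ)
      ≤ (dlToSet l x (fiber A c) : ℝ) + (if b ≠ c ∧ a = true then 1 else 0) := by
  obtain ⟨y, hy, hEq⟩ := exists_dl_min (l := l) (x := x) hc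
  have h1 : dlToSet (Fin.cons a l) (Fin.cons b x) A ≤ dl (Fin.cons a l) (Fin.cons b x) (Fin.cons c y) :=
    dlToSet_le_dl hy
  rw [dl_cons] at h1
  have := (Nat.cast_le (α := ℝ)).2 h1
  push_cast at this
  rw [hEq]
  split <;> simp_all <;> linarith

lemma avgDistP_eq (A : Set (Fin n → Bool)) :
    avgDistP p A = ∑ l : Fin n → Bool, ∑ x : Fin n → Bool,
      (bernWeight p l / 2 ^ n) * (dlToSet l x A : ℝ) := by
  simp [avgDistP]

lemma sum_weight_const (c : ℝ) :
    ∑ l : Fin n → Bool, ∑ x : Fin n → Bool, (bernWeight p l / 2 ^ n) * c = c := by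
  have hcard : (Fintype.card (Fin n → Bool) : ℝ) = 2 ^ n := by
    simp [Fintype.card_fun]
  calc ∑ l : Fin n → Bool, ∑ _x : Fin n → Bool, (bernWeight p l / 2 ^ n) * c
      = ∑ l : Fin n → Bool, (Fintype.card (Fin n → Bool) : ℝ) * ((bernWeight p l / 2 ^ n) * c) := by
        simp [Finset.sum_const, nsmul_eq_mul]
    _ = ∑ l : Fin n → Bool, bernWeight p l * c := by
        apply Finset.sum_congr rfl
        intro l _
        rw [hcard]
        field_simp
    _ = c := by rw [← Finset.sum_mul, sum_bernWeight, one_mul]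

end aux2

section aux3
variable {n : ℕ} {p : ℝ}

lemma avgDistP_succ (A : Set (Fin (n+1) → Bool)) :
    avgDistP p A = ∑ a : Bool, ∑ b : Bool,
      ((if a = true then p else 1-p) / 2) *
        ∑ l : Fin n → Bool, ∑ x : Fin n → Bool,
          (bernWeight p l / 2 ^ n) * (dlToSet (Fin.cons a l) (Fin.cons b x) A : ℝ) := by
  rw [avgDistP_eq, sum_pi_succ]
  refine Finset.sum_congr rfl fun a _ => ?_
  calc (∑ l : Fin n → Bool, ∑ x : Fin (n+1) → Bool,
          bernWeight p (Fin.cons a l) / 2 ^ (n+1) * (dlToSet (Fin.cons a l) x A : ℝ))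
      = ∑ l : Fin n → Bool, ∑ b : Bool, ∑ x : Fin n → Bool,
          bernWeight p (Fin.cons a l) / 2 ^ (n+1) *
            (dlToSet (Fin.cons a l) (Fin.cons b x) A : ℝ) :=
        Finset.sum_congr rfl fun l _ => sum_pi_succ _
    _ = ∑ b : Bool, ∑ l : Fin n → Bool, ∑ x : Fin n → Bool,
          bernWeight p (Fin.cons a l) / 2 ^ (n+1) *
            (dlToSet (Fin.cons a l) (Fin.cons b x) A : ℝ) := Finset.sum_comm
    _ = ∑ b : Bool, ((if a = true then p else 1-p) / 2) *
          ∑ l : Fin n → Bool, ∑ x : Fin n → Bool,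
            (bernWeight p l / 2 ^ n) * (dlToSet (Fin.cons a l) (Fin.cons b x) A : ℝ) := by
        refine Finset.sum_congr rfl fun b _ => ?_
        rw [Finset.mul_sum]
        refine Finset.sum_congr rfl fun l _ => ?_
        rw [Finset.mul_sum]
        refine Finset.sum_congr rfl fun x _ => ?_
        rw [bernWeight_cons]
        ring

lemma S_le (hp0 : 0 ≤ p) (hp1 : p ≤ 1) {A : Set (Fin (n+1) → Bool)} {c : Bool}
    (hc : (fiber A c).Nonempty) (a b : Bool) :
    (∑ l : Fin n → Bool, ∑ x : Fin n → Bool,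
      (bernWeight p l / 2 ^ n) * (dlToSet (Fin.cons a l) (Fin.cons b x) A : ℝ))
    ≤ avgDistP p (fiber A c) + (if b ≠ c ∧ a = true then 1 else 0) := by
  have hw : ∀ l : Fin n → Bool, 0 ≤ bernWeight p l / 2 ^ n := fun l =>
    div_nonneg (bernWeight_nonneg hp0 hp1 l) (by positivity)
  calc (∑ l : Fin n → Bool, ∑ x : Fin n → Bool,
        (bernWeight p l / 2 ^ n) * (dlToSet (Fin.cons a l) (Fin.cons b x) A : ℝ))
      ≤ ∑ l : Fin n → Bool, ∑ x : Fin n → Bool,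
        (bernWeight p l / 2 ^ n) * ((dlToSet l x (fiber A c) : ℝ)
          + (if b ≠ c ∧ a = true then 1 else 0)) := by
        refine Finset.sum_le_sum fun l _ => Finset.sum_le_sum fun x _ => ?_
        exact mul_le_mul_of_nonneg_left (dlToSet_cons_le hc a b l x) (hw l)
    _ = (∑ l : Fin n → Bool, ∑ x : Fin n → Bool,
          (bernWeight p l / 2 ^ n) * (dlToSet l x (fiber A c) : ℝ))
        + ∑ l : Fin n → Bool, ∑ x : Fin n → Bool,
          (bernWeight p l / 2 ^ n) * (if b ≠ c ∧ a = true then (1:ℝ) else 0) := by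
        rw [← Finset.sum_add_distrib]
        refine Finset.sum_congr rfl fun l _ => ?_
        rw [← Finset.sum_add_distrib]
        exact Finset.sum_congr rfl fun x _ => mul_add _ _ _
    _ = avgDistP p (fiber A c) + (if b ≠ c ∧ a = true then 1 else 0) := by
        rw [avgDistP_eq, sum_weight_const]

lemma avg_le_I (hp0 : 0 ≤ p) (hp1 : p ≤ 1) (A : Set (Fin (n+1) → Bool)) (c₀ : Bool)
    (h0 : (fiber A c₀).Nonempty) (h1 : (fiber A (!c₀)).Nonempty) :
    avgDistP p A ≤ (1 - p/2) * avgDistP p (fiber A c₀)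
      + (p/2) * avgDistP p (fiber A (!c₀)) := by
  have hball : ∀ b : Bool, (fiber A b).Nonempty := by
    intro b
    cases c₀ <;> simp only [Bool.not_false, Bool.not_true] at h1 <;> cases b <;> assumption
  have hwa : ∀ a : Bool, 0 ≤ (if a = true then p else 1-p) / 2 := by
    intro a; cases a <;> simp <;> linarith
  rw [avgDistP_succ]
  calc (∑ a : Bool, ∑ b : Bool, ((if a = true then p else 1-p) / 2) *
        ∑ l : Fin n → Bool, ∑ x : Fin n → Bool,
          (bernWeight p l / 2 ^ n) * (dlToSet (Fin.cons a l) (Fin.cons b x) A : ℝ))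
      ≤ ∑ a : Bool, ∑ b : Bool, ((if a = true then p else 1-p) / 2) *
          avgDistP p (fiber A (if a = true then b else c₀)) := by
        refine Finset.sum_le_sum fun a _ => Finset.sum_le_sum fun b _ => ?_
        have h := S_le hp0 hp1 (hball (if a = true then b else c₀)) a b
        have hcost : (if b ≠ (if a = true then b else c₀) ∧ a = true then (1:ℝ) else 0) = 0 := by
          cases a <;> simp
        rw [hcost, add_zero] at h
        exact mul_le_mul_of_nonneg_left h (hwa a)
    _ = (1 - p/2) * avgDistP p (fiber A c₀) + (p/2) * avgDistP p (fiber A (!c₀)) := by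
        cases c₀ <;> simp [Fintype.univ_bool] <;> ring

lemma avg_le_II (hp0 : 0 ≤ p) (hp1 : p ≤ 1) (A : Set (Fin (n+1) → Bool)) (c₀ : Bool)
    (h0 : (fiber A c₀).Nonempty) :
    avgDistP p A ≤ avgDistP p (fiber A c₀) + p/2 := by
  have hwa : ∀ a : Bool, 0 ≤ (if a = true then p else 1-p) / 2 := by
    intro a; cases a <;> simp <;> linarith
  rw [avgDistP_succ]
  calc (∑ a : Bool, ∑ b : Bool, ((if a = true then p else 1-p) / 2) *
        ∑ l : Fin n → Bool, ∑ x : Fin n → Bool,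
          (bernWeight p l / 2 ^ n) * (dlToSet (Fin.cons a l) (Fin.cons b x) A : ℝ))
      ≤ ∑ a : Bool, ∑ b : Bool, ((if a = true then p else 1-p) / 2) *
          (avgDistP p (fiber A c₀) + (if b ≠ c₀ ∧ a = true then 1 else 0)) := by
        refine Finset.sum_le_sum fun a _ => Finset.sum_le_sum fun b _ => ?_
        exact mul_le_mul_of_nonneg_left (S_le hp0 hp1 h0 a b) (hwa a)
    _ = avgDistP p (fiber A c₀) + p/2 := by
        cases c₀ <;> simp [Fintype.univ_bool] <;> ring

end aux3

section aux4
variable {n : ℕ}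

lemma cons_injective (b : Bool) :
    Function.Injective (fun z : Fin n → Bool => (Fin.cons b z : Fin (n+1) → Bool)) := by
  intro u v h
  have := congrArg Fin.tail h
  simpa [Fin.tail_cons] using this

lemma set_split (A : Set (Fin (n+1) → Bool)) :
    A = ((fun z : Fin n → Bool => (Fin.cons false z : Fin (n+1) → Bool)) '' fiber A false) ∪ ((fun z : Fin n → Bool => (Fin.cons true z : Fin (n+1) → Bool)) '' fiber A true) := by
  ext z
  constructor
  · intro hz
    cases hz0 : z 0
    · left
      refine ⟨Fin.tail z, ?_, ?_⟩
      · show Fin.cons false (Fin.tail z) ∈ A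
        rw [← hz0, Fin.cons_self_tail]
        exact hz
      · rw [← hz0]; exact Fin.cons_self_tail z
    · right
      refine ⟨Fin.tail z, ?_, ?_⟩
      · show Fin.cons true (Fin.tail z) ∈ A
        rw [← hz0, Fin.cons_self_tail]
        exact hz
      · rw [← hz0]; exact Fin.cons_self_tail z
  · intro hz
    rcases hz with ⟨y, hy, rfl⟩ | ⟨y, hy, rfl⟩
    · exact hy
    · exact hy

lemma card_fiber_split (A : Set (Fin (n+1) → Bool)) :
    Nat.card A = Nat.card (fiber A false) + Nat.card (fiber A true) := by
  rw [Nat.card_coe_set_eq, Nat.card_coe_set_eq, Nat.card_coe_set_eq]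
  conv_lhs => rw [set_split A]
  rw [Set.ncard_union_eq ?hdis (Set.toFinite _) (Set.toFinite _),
    Set.ncard_image_of_injective _ (cons_injective false),
    Set.ncard_image_of_injective _ (cons_injective true)]
  case hdis =>
    rw [Set.disjoint_left]
    rintro z ⟨y, _, rfl⟩ ⟨y', _, hz⟩
    have := congrFun hz 0
    simp at this

lemma fiber_nonempty_iff (A : Set (Fin (n+1) → Bool)) (b : Bool) :
    (fiber A b).Nonempty ↔ 0 < Nat.card (fiber A b) := by
  constructor
  · intro h
    have : Nonempty ↑(fiber A b) := h.to_subtype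
    exact Nat.card_pos
  · intro h
    have := Nat.card_pos_iff.1 h
    exact Set.nonempty_coe_sort.1 this.1

lemma exists_fiber_nonempty {A : Set (Fin (n+1) → Bool)} (hA : A.Nonempty) :
    ∃ b : Bool, (fiber A b).Nonempty := by
  obtain ⟨z, hz⟩ := hA
  refine ⟨z 0, ⟨Fin.tail z, ?_⟩⟩
  simpa [fiber, Fin.cons_self_tail] using hz

end aux4

section analytic
open Real

lemma LC {u t : ℝ} (hu : 0 ≤ u) (hut : u ≤ t) (ht : 0 < t) :
    Real.log ((Real.exp u + Real.exp (-u)) / 2)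
      ≤ (u / t) * Real.log ((Real.exp t + Real.exp (-t)) / 2) := by
  rcases eq_or_lt_of_le hu with h0 | hu0
  · rw [← h0]
    simp
  · have hp : 1 ≤ t / u := (one_le_div hu0).2 hut
    have H := Real.arith_mean_le_rpow_mean (s := (Finset.univ : Finset Bool))
      (w := fun _ => 1/2) (z := fun b => cond b (Real.exp u) (Real.exp (-u)))
      (fun i _ => by norm_num) (by simp [Fintype.univ_bool])
      (fun i _ => by cases i <;> simp <;> positivity) hp
    rw [show (Finset.univ : Finset Bool) = {true, false} from Fintype.univ_bool,
      Finset.sum_pair (by decide), Finset.sum_pair (by decide)] at H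
    simp only [cond_true, cond_false] at H
    have hrw1 : Real.exp u ^ (t/u) = Real.exp t := by
      rw [← Real.exp_mul, mul_div_cancel₀ _ (ne_of_gt hu0)]
    have hrw2 : Real.exp (-u) ^ (t/u) = Real.exp (-t) := by
      rw [← Real.exp_mul]
      congr 1
      field_simp
    rw [hrw1, hrw2] at H
    have hsum : (1:ℝ)/2 * Real.exp u + 1/2 * Real.exp (-u) = (Real.exp u + Real.exp (-u))/2 := by ring
    have hsum2 : (1:ℝ)/2 * Real.exp t + 1/2 * Real.exp (-t) = (Real.exp t + Real.exp (-t))/2 := by ring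
    have hinv : 1/(t/u) = u/t := by
      field_simp
    rw [hsum, hsum2, hinv] at H
    have hpos : (0:ℝ) < (Real.exp t + Real.exp (-t))/2 := by positivity
    calc Real.log ((Real.exp u + Real.exp (-u)) / 2)
        ≤ Real.log (((Real.exp t + Real.exp (-t))/2) ^ (u/t)) := by
          apply Real.log_le_log (by positivity) H
      _ = (u/t) * Real.log ((Real.exp t + Real.exp (-t))/2) := Real.log_rpow hpos _
end analytic

section analytic2
open Real

/-- Abbreviation for the per-coordinate constant. -/
noncomputable def Kc (p γ : ℝ) : ℝ :=
  Real.log (1 + Real.exp (γ / 2)) - (1 - p) * γ / 2 - Real.log 2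

lemma log_one_add_exp (t : ℝ) :
    Real.log (1 + Real.exp t) = t + Real.log (1 + Real.exp (-t)) := by
  have key : (1:ℝ) + Real.exp t = Real.exp t * (1 + Real.exp (-t)) := by
    rw [mul_add, mul_one, ← Real.exp_add]
    simp [add_comm]
  rw [key, Real.log_mul (by positivity) (by positivity), Real.log_exp]

lemma LA {p γ : ℝ} (hγ : 0 ≤ γ) {r : ℝ} (hr0 : 0 ≤ r) (hr : r ≤ Real.exp (-γ)) :
    p * γ / 2 + Real.log ((1 + r) / 2) ≤ Kc p γ := by
  unfold Kc
  rw [log_one_add_exp (γ/2)]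
  have h1 : Real.log ((1 + r)/2) = Real.log (1 + r) - Real.log 2 :=
    Real.log_div (by positivity) (by norm_num)
  have h2 : Real.log (1 + r) ≤ Real.log (1 + Real.exp (-(γ/2))) := by
    apply Real.log_le_log (by positivity)
    have : Real.exp (-γ) ≤ Real.exp (-(γ/2)) := Real.exp_le_exp.2 (by linarith)
    linarith
  linarith

lemma htilde_le {p γ : ℝ} (hγ : 0 ≤ γ) :
    Real.log ((Real.exp (γ/2) + Real.exp (-(γ/2))) / 2) - (1 - p) * γ / 2 ≤ Kc p γ := by
  unfold Kc
  have h2 : Real.log ((Real.exp (γ/2) + Real.exp (-(γ/2))) / 2)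
      ≤ Real.log ((1 + Real.exp (γ/2)) / 2) := by
    apply Real.log_le_log (by positivity)
    have : Real.exp (-(γ/2)) ≤ 1 := Real.exp_le_one_iff.2 (by linarith)
    linarith
  have h3 : Real.log ((1 + Real.exp (γ/2)) / 2)
      = Real.log (1 + Real.exp (γ/2)) - Real.log 2 :=
    Real.log_div (by positivity) (by norm_num)
  linarith

lemma residual_le {p γ : ℝ} (hp1 : p ≤ 1) (hγ : 0 < γ) (hcond : 0 ≤ Kc p γ)
    {r : ℝ} (hr1 : Real.exp (-γ) ≤ r) (hr2 : r ≤ 1) :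
    Real.log ((1 + r) / 2) - p / 2 * Real.log r ≤ Kc p γ := by
  have hr0 : 0 < r := lt_of_lt_of_le (Real.exp_pos _) hr1
  set u : ℝ := -Real.log r / 2 with hu_def
  have hlogr : Real.log r = -(2*u) := by rw [hu_def]; ring
  have hu0 : 0 ≤ u := by
    have := Real.log_nonpos (le_of_lt hr0) hr2
    rw [hu_def]; linarith
  have hut : u ≤ γ/2 := by
    have h := Real.exp_le_exp.1 (by rwa [Real.exp_log hr0] : Real.exp (-γ) ≤ Real.exp (Real.log r))
    rw [hu_def]; linarith
  have hrexp : r = Real.exp (-(2*u)) := by rw [← hlogr, Real.exp_log hr0]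
  -- rewrite the goal
  rw [hrexp, Real.log_exp]
  have hid : Real.log ((1 + Real.exp (-(2*u))) / 2)
      = Real.log ((Real.exp u + Real.exp (-u)) / 2) - u := by
    have key : (1 + Real.exp (-(2*u))) / 2
        = Real.exp (-u) * ((Real.exp u + Real.exp (-u)) / 2) := by
      have e1 : Real.exp (-u) * Real.exp u = 1 := by
        rw [← Real.exp_add]; simp
      have e2 : Real.exp (-u) * Real.exp (-u) = Real.exp (-(2*u)) := by
        rw [← Real.exp_add]; ring_nf
      field_simp
      linarith [e1, e2]
    rw [key, Real.log_mul (by positivity) (by positivity), Real.log_exp]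
    ring
  rw [hid]
  have hLC := LC hu0 hut (by linarith : (0:ℝ) < γ/2)
  -- goal: log((e^u+e^{-u})/2) - u - p/2 * (-(2u)) ≤ K
  -- i.e. log(cosh-part) - (1-p) u ≤ K
  have hmain : Real.log ((Real.exp u + Real.exp (-u)) / 2) - (1-p)*u ≤ Kc p γ := by
    have hfrac0 : 0 ≤ u/(γ/2) := by positivity
    have hfrac1 : u/(γ/2) ≤ 1 := by
      rw [div_le_one (by linarith)]; exact hut
    have heq : (1-p)*u = (u/(γ/2)) * ((1-p) * γ / 2) := by
      field_simp
    have step : Real.log ((Real.exp u + Real.exp (-u)) / 2) - (1-p)*u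
        ≤ (u/(γ/2)) * (Real.log ((Real.exp (γ/2) + Real.exp (-(γ/2))) / 2) - (1-p) * γ / 2) := by
      rw [mul_sub, ← heq]
      exact sub_le_sub_right hLC _
    have hK := htilde_le (p := p) (γ := γ) (le_of_lt hγ)
    set L := Real.log ((Real.exp (γ/2) + Real.exp (-(γ/2))) / 2) - (1 - p) * γ / 2 with hL
    rcases le_or_gt L 0 with hL0 | hL0
    · have : (u/(γ/2)) * L ≤ 0 := mul_nonpos_of_nonneg_of_nonpos hfrac0 hL0
      exact le_trans step (le_trans this hcond)
    · have : (u/(γ/2)) * L ≤ L := mul_le_of_le_one_left hL0.le hfrac1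
      exact le_trans step (le_trans this hK)
  linarith

end analytic2

section mainproof
open Real

lemma dl_self {n : ℕ} (l x : Fin n → Bool) : dl l x x = 0 := by
  simp [dl]

lemma dlToSet_nonneg_zero {n : ℕ} (l x : Fin n → Bool) {A : Set (Fin n → Bool)} (hx : x ∈ A) :
    dlToSet l x A = 0 :=
  Nat.le_zero.1 (by simpa [dl_self] using dlToSet_le_dl (l := l) (x := x) hx)

theorem main_ind {p : ℝ} (hp0 : 0 < p) (hp1 : p ≤ 1) {γ : ℝ} (hγ : 0 < γ)
    (hcond : 0 ≤ Kc p γ) :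
    ∀ n : ℕ, ∀ A : Set (Fin n → Bool), A.Nonempty →
      γ * avgDistP p A + Real.log ((Nat.card A : ℝ) / 2 ^ n) ≤ n * Kc p γ := by
  intro n
  induction n with
  | zero =>
    intro A hA
    obtain ⟨w, hw⟩ := hA
    have hAuniv : A = Set.univ := by
      apply Set.eq_univ_of_forall
      intro z
      have : z = w := Subsingleton.elim z w
      rwa [this]
    subst hAuniv
    have hcard : (Nat.card ↥(Set.univ : Set (Fin 0 → Bool)) : ℝ) = 1 := by
      rw [Nat.card_congr (Equiv.Set.univ _), Nat.card_eq_fintype_card]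
      simp
    have havg : avgDistP p (Set.univ : Set (Fin 0 → Bool)) = 0 := by
      rw [avgDistP_eq]
      refine Finset.sum_eq_zero fun l _ => Finset.sum_eq_zero fun x _ => ?_
      rw [dlToSet_nonneg_zero l x (Set.mem_univ x)]
      simp
    rw [havg, hcard]
    simp
  | succ m ih =>
    intro A hA
    have hcardA : 0 < Nat.card A := by
      have : Nonempty ↑A := hA.to_subtype
      exact Nat.card_pos
    -- choose the bigger fiber
    obtain ⟨c₀, hc₀, hle⟩ : ∃ c₀ : Bool, (fiber A c₀).Nonempty
        ∧ Nat.card (fiber A (!c₀)) ≤ Nat.card (fiber A c₀) := by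
      rcases le_total (Nat.card (fiber A true)) (Nat.card (fiber A false)) with h | h
      · refine ⟨false, ?_, by simpa using h⟩
        rw [fiber_nonempty_iff]
        have := card_fiber_split A
        omega
      · refine ⟨true, ?_, by simpa using h⟩
        rw [fiber_nonempty_iff]
        have := card_fiber_split A
        omega
    set a0 : ℝ := (Nat.card (fiber A c₀) : ℝ) with ha0def
    set a1 : ℝ := (Nat.card (fiber A (!c₀)) : ℝ) with ha1def
    have ha0 : 0 < a0 := by
      rw [ha0def]
      exact_mod_cast (fiber_nonempty_iff A c₀).1 hc₀
    have ha1 : 0 ≤ a1 := by rw [ha1def]; positivity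
    have hNA : (Nat.card A : ℝ) = a0 + a1 := by
      rw [ha0def, ha1def, card_fiber_split A]
      cases c₀ <;> simp only [Bool.not_false, Bool.not_true] <;> push_cast <;> ring
    set r : ℝ := a1 / a0 with hrdef
    have hr0 : 0 ≤ r := div_nonneg ha1 ha0.le
    have hr1 : r ≤ 1 := by
      rw [hrdef, div_le_one ha0, ha1def, ha0def]
      exact_mod_cast hle
    have hpow : (0:ℝ) < 2 ^ m := by positivity
    have hlogA : Real.log ((Nat.card A : ℝ) / 2 ^ (m+1))
        = Real.log (a0 / 2 ^ m) + Real.log ((1 + r) / 2) := by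
      rw [← Real.log_mul (by positivity) (by positivity)]
      congr 1
      rw [hNA, hrdef]
      field_simp
      ring
    have hIH0 : γ * avgDistP p (fiber A c₀) + Real.log (a0 / 2 ^ m) ≤ m * Kc p γ :=
      ih (fiber A c₀) hc₀
    rcases lt_or_ge r (Real.exp (-γ)) with hsmall | hbig
    · -- use inequality (II)
      have hII := avg_le_II hp0.le hp1 A c₀ hc₀
      have h1 : γ * avgDistP p A ≤ γ * (avgDistP p (fiber A c₀) + p / 2) :=
        mul_le_mul_of_nonneg_left hII hγ.le
      have hLA := LA (p := p) hγ.le hr0 hsmall.le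
      rw [hlogA]
      push_cast
      nlinarith [hIH0, hLA, h1]
    · -- use inequality (I)
      have ha1pos : 0 < a1 := by
        by_contra hcon
        push_neg at hcon
        have : a1 = 0 := le_antisymm hcon ha1
        rw [hrdef, this] at hbig
        simp only [zero_div] at hbig
        exact absurd hbig (not_le.2 (Real.exp_pos _))
      have hfib1 : (fiber A (!c₀)).Nonempty := by
        rw [fiber_nonempty_iff]
        rw [ha1def] at ha1pos
        exact_mod_cast ha1pos
      have hIH1 : γ * avgDistP p (fiber A (!c₀)) + Real.log (a1 / 2 ^ m) ≤ m * Kc p γ :=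
        ih (fiber A (!c₀)) hfib1
      have hI := avg_le_I hp0.le hp1 A c₀ hc₀ hfib1
      have h1 : γ * avgDistP p A ≤ γ * ((1 - p/2) * avgDistP p (fiber A c₀)
          + (p/2) * avgDistP p (fiber A (!c₀))) :=
        mul_le_mul_of_nonneg_left hI hγ.le
      have hres := residual_le hp1 hγ hcond hbig hr1
      have hlogr : Real.log (a1 / 2 ^ m) = Real.log (a0 / 2 ^ m) + Real.log r := by
        rw [← Real.log_mul (by positivity) (by rw [hrdef]; positivity)]
        congr 1
        rw [hrdef]
        field_simp
      have hc0nn : (0:ℝ) ≤ 1 - p/2 := by linarith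
      have hc1nn : (0:ℝ) ≤ p/2 := by linarith
      have comb := add_le_add (mul_le_mul_of_nonneg_left hIH0 hc0nn)
        (mul_le_mul_of_nonneg_left hIH1 hc1nn)
      rw [hlogA]
      push_cast
      nlinarith [h1, comb, hres, hlogr]

end mainproof


/-- Lemma 6.8: for `0 < p ≤ 1`, `q = 1 - p` and `γ ≥ 0` such that
`ln(1+e^{γ/2}) - qγ/2 - ln 2 ≥ 0`, every `n ≥ 1` and every nonempty `A ⊆ C_n` satisfy
`γ·Δ(A,p) + ln μ_n(A) ≤ n(ln(1+e^{γ/2}) - qγ/2 - ln 2)`, where `μ_n(A) = |A|/2^n`. -/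
theorem stmt17 (p : ℝ) (hp0 : 0 < p) (hp1 : p ≤ 1) (γ : ℝ) (hγ : 0 ≤ γ)
    (hcond : 0 ≤ Real.log (1 + Real.exp (γ / 2)) - (1 - p) * γ / 2 - Real.log 2) :
    ∀ n : ℕ, 1 ≤ n → ∀ A : Set (Fin n → Bool), A.Nonempty →
      γ * avgDistP p A + Real.log ((Nat.card A : ℝ) / 2 ^ n) ≤
        n * (Real.log (1 + Real.exp (γ / 2)) - (1 - p) * γ / 2 - Real.log 2) := by
  intro n hn A hA
  have hμ : Real.log ((Nat.card A : ℝ) / 2 ^ n) ≤ 0 := by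
    apply Real.log_nonpos (by positivity)
    rw [div_le_one (by positivity)]
    have h1 : Nat.card ↑A ≤ Nat.card (Fin n → Bool) := by
      rw [Nat.card_coe_set_eq]
      calc A.ncard ≤ (Set.univ : Set (Fin n → Bool)).ncard :=
            Set.ncard_le_ncard (Set.subset_univ A) (Set.toFinite _)
        _ = Nat.card (Fin n → Bool) := Set.ncard_univ _
    have h2 : (Nat.card (Fin n → Bool) : ℝ) = 2 ^ n := by
      rw [Nat.card_eq_fintype_card]
      simp [Fintype.card_fun]
    calc (Nat.card ↑A : ℝ) ≤ (Nat.card (Fin n → Bool) : ℝ) := by exact_mod_cast h1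
      _ = 2 ^ n := h2
  rcases eq_or_lt_of_le hγ with h0 | hpos
  · rw [← h0]
    have hK : (0:ℝ) ≤ Real.log (1 + Real.exp (0 / 2)) - (1 - p) * 0 / 2 - Real.log 2 := by
      rw [h0] at hcond ⊢
      exact hcond
    have hnK : (0:ℝ) ≤ n * (Real.log (1 + Real.exp (0 / 2)) - (1 - p) * 0 / 2 - Real.log 2) :=
      mul_nonneg (by positivity) hK
    linarith
  · have := main_ind hp0 hp1 hpos (by rw [Kc]; exact hcond) n A hA
    rw [Kc] at this
    exact this
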